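/- Let k ≥ 1 be an integer. Then the positive integer solutions of the Pell equation x² − (k² + 1)·y² = −1 are exactly the pairs (x, y) = (V_{2n−1}(2k,1)/2, U_{2n−1}(2k,1)) for n ≥ 1. -/
import Mathlib


/-- Generalized Fibonacci sequence: `U 0 = 0`, `U 1 = 1`, `U (n+2) = k * U (n+1) + s * U n`. -/
def genFib (k s : ℤ) : ℕ → ℤ
  | 0 => 0
  | 1 => 1
  | n + 2 => k * genFib k s (n + 1) + s * genFib k s n

/-- Generalized Lucas sequence: `V 0 = 2`, `V 1 = k`, `V (n+2) = k * V (n+1) + s * V n`. -/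
def genLucas (k s : ℤ) : ℕ → ℤ
  | 0 => 2
  | 1 => k
  | n + 2 => k * genLucas k s (n + 1) + s * genLucas k s n

lemma fib_rec' (k s : ℤ) (n : ℕ) :
    genFib k s (n+2) = k * genFib k s (n+1) + s * genFib k s n := rfl

/-- Cassini-type identity for `U = genFib (2k) 1`. -/
lemma cassini (k : ℤ) : ∀ m : ℕ, (genFib (2*k) 1 (m+1))^2
    - 2*k * genFib (2*k) 1 (m+1) * genFib (2*k) 1 m - (genFib (2*k) 1 m)^2 = (-1)^m := by
  intro m
  induction m with
  | zero => simp [genFib]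
  | succ m ih =>
    rw [fib_rec', pow_succ]
    linear_combination (-1 : ℤ) * ih

/-- `V` in terms of `U`. -/
lemma hVU (k : ℤ) : ∀ m : ℕ,
    genLucas (2*k) 1 m = 2 * genFib (2*k) 1 (m+1) - 2*k * genFib (2*k) 1 m := by
  have key : ∀ m : ℕ,
      (genLucas (2*k) 1 m = 2 * genFib (2*k) 1 (m+1) - 2*k * genFib (2*k) 1 m) ∧
      (genLucas (2*k) 1 (m+1) = 2 * genFib (2*k) 1 (m+2) - 2*k * genFib (2*k) 1 (m+1)) := by
    intro m
    induction m with
    | zero => exact ⟨by simp [genFib, genLucas], by simp [genFib, genLucas]; ring⟩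
    | succ m ih =>
      obtain ⟨h1, h2⟩ := ih
      refine ⟨h2, ?_⟩
      have e1 : genLucas (2*k) 1 (m+1+1) = 2*k * genLucas (2*k) 1 (m+1) + 1 * genLucas (2*k) 1 m := rfl
      have e2 : genFib (2*k) 1 (m+1+1+1)
          = 2*k * (2*k * genFib (2*k) 1 (m+1) + 1 * genFib (2*k) 1 m) + 1 * genFib (2*k) 1 (m+1) := rfl
      have e4 : genFib (2*k) 1 (m+2) = 2*k * genFib (2*k) 1 (m+1) + 1 * genFib (2*k) 1 m := rfl
      rw [e4] at h2
      have e3 : genFib (2*k) 1 (m+1+1) = 2*k * genFib (2*k) 1 (m+1) + 1 * genFib (2*k) 1 m := rfl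
      rw [e1, e2, e3]
      linear_combination 2*k*h2 + h1
  exact fun m => (key m).1

lemma descent (k : ℤ) (hk : 1 ≤ k) :
    ∀ N : ℕ, ∀ x y : ℤ, 0 < x → 0 < y → y ≤ (N : ℤ) →
      x ^ 2 - (k ^ 2 + 1) * y ^ 2 = -1 →
      ∃ n : ℕ, 1 ≤ n ∧ 2 * x = genLucas (2 * k) 1 (2 * n - 1) ∧ y = genFib (2 * k) 1 (2 * n - 1) := by
  intro N
  induction N with
  | zero => intro x y hx hy hyN hE; exfalso; norm_num at hyN; linarith
  | succ N ih =>
    intro x y hx hy hyN hE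
    rcases eq_or_lt_of_le (show (1:ℤ) ≤ y from hy) with heq | hygt
    · -- base case y = 1
      obtain rfl : y = 1 := heq.symm
      have hfac : (x - k) * (x + k) = 0 := by linear_combination hE
      rcases mul_eq_zero.mp hfac with h | h
      · obtain rfl : x = k := by linarith
        refine ⟨1, le_refl 1, ?_, ?_⟩ <;> simp [genLucas, genFib]
      · exfalso; linarith
    · -- descent step, y ≥ 2
      set x' := (2*k^2+1)*x - 2*k*(k^2+1)*y with hx'def
      set y' := (2*k^2+1)*y - 2*k*x with hy'def
      have hE' : x'^2 - (k^2+1)*y'^2 = -1 := by rw [hx'def, hy'def]; linear_combination hE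
      have hk2 : (0:ℤ) < 2*k := by linarith
      have hfact : y' * ((2*k^2+1)*y + 2*k*x) = y^2 + 4*k^2 := by
        rw [hy'def]; linear_combination (-4*k^2) * hE
      have hpos2 : 0 < (2*k^2+1)*y + 2*k*x := by nlinarith [mul_pos hk2 hx, sq_nonneg k]
      have hy'pos : 0 < y' := by
        rcases mul_pos_iff.mp (show 0 < y' * ((2*k^2+1)*y + 2*k*x) from hfact ▸ by positivity) with
          ⟨h, _⟩ | ⟨_, h⟩
        · exact h
        · linarith
      have hxky : 0 < x - k*y := by
        have hfac2 : (x - k*y) * (x + k*y) = y^2 - 1 := by linear_combination hE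
        have hr : (0:ℤ) < y^2 - 1 := by nlinarith
        rcases mul_pos_iff.mp (show 0 < (x - k*y) * (x + k*y) from hfac2 ▸ hr) with
          ⟨h, _⟩ | ⟨_, h⟩
        · exact h
        · exfalso; nlinarith [mul_pos (show (0:ℤ) < k by linarith) hy]
      have hy'lt : y' < y := by
        rw [hy'def]; nlinarith [mul_pos hk2 hxky]
      have hinvy : y = 2*k*x' + (2*k^2+1)*y' := by rw [hx'def, hy'def]; ring
      have hinvx : x = (2*k^2+1)*x' + 2*k*(k^2+1)*y' := by rw [hx'def, hy'def]; ring
      have hx'pos : 0 < x' := by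
        by_contra hle
        push_neg at hle
        have h1 : 0 < 2*k*(x' + k*y') := by nlinarith
        have h2 : 0 < x' + k*y' := by
          rcases mul_pos_iff.mp h1 with ⟨_, h⟩ | ⟨h, _⟩
          · exact h
          · linarith
        have h3 : 0 < k*y' - x' := by nlinarith [mul_pos (show (0:ℤ) < k by linarith) hy'pos]
        nlinarith [mul_pos h3 h2, sq_nonneg (y' - 1)]
      have hy'N : y' ≤ (N : ℤ) := by push_cast at hyN; linarith
      obtain ⟨n, hn1, hL, hF⟩ := ih x' y' hx'pos hy'pos hy'N hE'
      have hm : 2*(n+1) - 1 = (2*n-1) + 1 + 1 := by omega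
      set m := 2*n - 1 with hmdef
      have eL : genLucas (2*k) 1 (m+1+1) = 2*k * genLucas (2*k) 1 (m+1) + 1 * genLucas (2*k) 1 m := rfl
      have eF : genFib (2*k) 1 (m+1+1) = 2*k * genFib (2*k) 1 (m+1) + 1 * genFib (2*k) 1 m := rfl
      have hVm := hVU k m
      have hVm1 := hVU k (m+1)
      rw [hVm] at hL
      refine ⟨n + 1, by omega, ?_, ?_⟩
      · rw [hm, eL, hVm1, eF, hVm]
        linear_combination 2*hinvx + (2*k^2+1)*hL + 4*k*(k^2+1)*hF
      · rw [hm, eF]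
        linear_combination hinvy + k*hL + (2*k^2+1)*hF

theorem solutions_neg_one_k_sq_add_one (k : ℤ) (hk : 1 ≤ k) (x y : ℤ) (hx : 0 < x) (hy : 0 < y) :
    x ^ 2 - (k ^ 2 + 1) * y ^ 2 = -1 ↔
      ∃ n : ℕ, 1 ≤ n ∧ 2 * x = genLucas (2 * k) 1 (2 * n - 1) ∧ y = genFib (2 * k) 1 (2 * n - 1) := by
  constructor
  · intro hE
    exact descent k hk y.natAbs x y hx hy (Int.le_natAbs) hE
  · rintro ⟨n, hn, h2x, hy2⟩
    have hm : 2*n - 1 = 2*(n-1) + 1 := by omega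
    rw [hm] at h2x hy2
    set m := 2*(n-1) + 1 with hmdef
    have hC' := cassini k m
    have hparity : ((-1:ℤ))^m = -1 := by
      rw [hmdef, pow_succ, pow_mul]; norm_num
    rw [hparity] at hC'
    rw [hVU k m] at h2x
    have hx' : x = genFib (2*k) 1 (m+1) - k * genFib (2*k) 1 m := by linarith
    rw [hx', hy2]
    linear_combination hC'
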